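/- arXiv:2302.08235 — 3 statements merged into one kernel-verified Lean document; each statement's English description precedes it below -/
import Mathlib

section
/- Let G^0,…,G^L be linear maps and let h(Θ) := Σ_l ‖G^l W^l‖₁ + ν Σ_l ‖Π_l W^l‖₁ for Θ = (W^L,…,W^0), where Π_l is the projection onto ker(G^l). Let Ḡ^l denote the restriction of G^l to ker(G^l)^⊥ (an injective map onto the image), and M := max_l ‖(Ḡ^l)^{-1}‖_{1→1}. If h(Θ) ≤ 1 then Σ_{l=0}^{L} ‖W^l‖₁ ≤ M + 1/ν. -/
/-- The entrywise `ℓ₁`-norm of a matrix. -/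
noncomputable def ent1 {m n : Type*} [Fintype m] [Fintype n] (A : Matrix m n ℝ) : ℝ :=
  ∑ i, ∑ j, |A i j|

/-- The `ℓ₁→ℓ₁` induced operator norm of a matrix: `sup_{x ≠ 0} ‖Bx‖₁ / ‖x‖₁`. -/
noncomputable def op11 {m n : Type*} [Fintype m] [Fintype n] (B : Matrix m n ℝ) : ℝ :=
  sSup {r : ℝ | ∃ x : n → ℝ, x ≠ 0 ∧ r = (∑ i, |B.mulVec x i|) / (∑ j, |x j|)}

/-
The decomposition `W = H (G W) + P W` (from `H G = 1 - P`) and the triangle inequality give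
`‖W‖₁ ≤ ‖H‖_{1→1} ‖G W‖₁ + ‖P W‖₁` layer by layer. Summing over the layers and writing
`A = Σ ‖G W‖₁`, `B = Σ ‖P W‖₁`, the hypothesis `A + ν B ≤ 1` bounds `A` by `1` and `B` by `1/ν`.
-/

open Finset Matrix

section EntrywiseNorm

variable {m n k : Type*} [Fintype m] [Fintype n] [Fintype k]

lemma ent1_nonneg (A : Matrix m n ℝ) : 0 ≤ ent1 A := by
  unfold ent1; positivity

lemma ent1_add_le (A C : Matrix m n ℝ) : ent1 (A + C) ≤ ent1 A + ent1 C := by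
  simp only [ent1, ← sum_add_distrib]
  gcongr with i _ j _
  exact abs_add_le _ _

lemma sum_abs_mulVec_le_ent1_mul (B : Matrix m n ℝ) (x : n → ℝ) :
    ∑ i, |(B *ᵥ x) i| ≤ ent1 B * ∑ j, |x j| := by
  rw [ent1, sum_mul]
  gcongr with i _
  calc |(B *ᵥ x) i| ≤ ∑ j, |B i j| * |x j| := by
        simpa only [mulVec, dotProduct, abs_mul] using
          abs_sum_le_sum_abs (fun j => B i j * x j) univ
    _ ≤ ∑ j, |B i j| * ∑ j', |x j'| := by
        gcongr with j _
        exact single_le_sum (fun j' _ => abs_nonneg (x j')) (mem_univ j)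
    _ = (∑ j, |B i j|) * ∑ j, |x j| := (sum_mul ..).symm

lemma sum_abs_pos_of_ne_zero {x : n → ℝ} (hx : x ≠ 0) : 0 < ∑ j, |x j| := by
  obtain ⟨j, hj⟩ := Function.ne_iff.mp hx
  exact sum_pos' (fun _ _ => abs_nonneg _) ⟨j, mem_univ j, abs_pos.mpr hj⟩

lemma bddAbove_op11_ratios (B : Matrix m n ℝ) :
    BddAbove {r : ℝ | ∃ x : n → ℝ, x ≠ 0 ∧ r = (∑ i, |B.mulVec x i|) / (∑ j, |x j|)} := by
  refine ⟨ent1 B, ?_⟩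
  rintro r ⟨x, hx, rfl⟩
  rw [div_le_iff₀ (sum_abs_pos_of_ne_zero hx)]
  exact sum_abs_mulVec_le_ent1_mul B x

lemma op11_nonneg (B : Matrix m n ℝ) : 0 ≤ op11 B := by
  apply Real.sSup_nonneg
  rintro r ⟨x, -, rfl⟩
  positivity

lemma sum_abs_mulVec_le_op11_mul (B : Matrix m n ℝ) (x : n → ℝ) :
    ∑ i, |(B *ᵥ x) i| ≤ op11 B * ∑ j, |x j| := by
  rcases eq_or_ne x 0 with rfl | hx
  · simp
  rw [← div_le_iff₀ (sum_abs_pos_of_ne_zero hx)]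
  exact le_csSup (bddAbove_op11_ratios B) ⟨x, hx, rfl⟩

lemma ent1_mul_le_op11_mul_ent1 (B : Matrix m n ℝ) (A : Matrix n k ℝ) :
    ent1 (B * A) ≤ op11 B * ent1 A := by
  have hcol : ∀ j, ∑ i, |(B * A) i j| ≤ op11 B * ∑ i, |A i j| := fun j =>
    sum_abs_mulVec_le_op11_mul B (fun i => A i j)
  rw [ent1, ent1, sum_comm, sum_comm (f := fun i j => |A i j|), mul_sum]
  exact sum_le_sum fun j _ => hcol j

lemma ent1_le_of_mul_eq_one_sub [DecidableEq n] {W : Matrix n k ℝ} {G : Matrix m n ℝ}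
    {P : Matrix n n ℝ} {H : Matrix n m ℝ} (hHG : H * G = 1 - P) :
    ent1 W ≤ op11 H * ent1 (G * W) + ent1 (P * W) := by
  have hW : W = H * (G * W) + P * W := by
    rw [← Matrix.mul_assoc, hHG, Matrix.sub_mul, Matrix.one_mul, sub_add_cancel]
  calc ent1 W ≤ ent1 (H * (G * W)) + ent1 (P * W) := by
        conv_lhs => rw [hW]
        exact ent1_add_le _ _
    _ ≤ op11 H * ent1 (G * W) + ent1 (P * W) := by gcongr; exact ent1_mul_le_op11_mul_ent1 _ _

end EntrywiseNorm

theorem stmt7_general (L : ℕ) (p q : ℕ → ℕ)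
    (W : ∀ l : Fin (L + 1), Matrix (Fin (p (l.val + 1))) (Fin (p l.val)) ℝ)
    (G : ∀ l : Fin (L + 1), Matrix (Fin (q l.val)) (Fin (p (l.val + 1))) ℝ)
    (P : ∀ l : Fin (L + 1), Matrix (Fin (p (l.val + 1))) (Fin (p (l.val + 1))) ℝ)
    (H : ∀ l : Fin (L + 1), Matrix (Fin (p (l.val + 1))) (Fin (q l.val)) ℝ)
    (hHG : ∀ l, H l * G l = 1 - P l)
    (ν M : ℝ) (hν : 0 < ν)
    (hM : M = ⨆ l : Fin (L + 1), op11 (H l))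
    (hΘ : (∑ l, ent1 (G l * W l)) + ν * ∑ l, ent1 (P l * W l) ≤ 1) :
    ∑ l, ent1 (W l) ≤ M + 1 / ν := by
  have hHM : ∀ l, op11 (H l) ≤ M := fun l =>
    hM ▸ le_ciSup (f := fun l => op11 (H l)) (Set.finite_range _).bddAbove l
  have hM0 : 0 ≤ M := (op11_nonneg (H 0)).trans (hHM 0)
  set A := ∑ l, ent1 (G l * W l)
  set B := ∑ l, ent1 (P l * W l)
  have hA0 : 0 ≤ A := sum_nonneg fun _ _ => ent1_nonneg _
  have hB0 : 0 ≤ B := sum_nonneg fun _ _ => ent1_nonneg _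
  have hA1 : A ≤ 1 := by nlinarith
  have hB1 : B ≤ 1 / ν := by rw [le_div_iff₀ hν]; nlinarith
  calc ∑ l, ent1 (W l) ≤ ∑ l, (M * ent1 (G l * W l) + ent1 (P l * W l)) := by
        gcongr with l _
        exact (ent1_le_of_mul_eq_one_sub (hHG l)).trans
          (by gcongr; exacts [ent1_nonneg _, hHM l])
    _ = M * A + B := by rw [sum_add_distrib, mul_sum]
    _ ≤ M + 1 / ν := by nlinarith

/-- let `h(Θ) = Σ_l ‖G^l W^l‖₁ + ν Σ_l ‖Π_l W^l‖₁` where `Π_l` is the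
projection onto `ker G^l` (so `G^l Π_l = 0`, `Π_l² = Π_l`) and `H^l` is the inverse
`(Ḡ^l)⁻¹` of the restriction of `G^l` to `(ker G^l)^⊥` (so `H^l G^l = 1 − Π_l`).
With `M = max_l ‖(Ḡ^l)⁻¹‖_{1→1}`, if `h(Θ) ≤ 1` then `Σ_l ‖W^l‖₁ ≤ M + 1/ν`. -/
theorem stmt7 (L : ℕ) (p q : ℕ → ℕ)
    (W : ∀ l : Fin (L + 1), Matrix (Fin (p (l.val + 1))) (Fin (p l.val)) ℝ)
    (G : ∀ l : Fin (L + 1), Matrix (Fin (q l.val)) (Fin (p (l.val + 1))) ℝ)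
    (P : ∀ l : Fin (L + 1), Matrix (Fin (p (l.val + 1))) (Fin (p (l.val + 1))) ℝ)
    (H : ∀ l : Fin (L + 1), Matrix (Fin (p (l.val + 1))) (Fin (q l.val)) ℝ)
    (hProj : ∀ l, P l * P l = P l)
    (hGP : ∀ l, G l * P l = 0)
    (hHG : ∀ l, H l * G l = 1 - P l)
    (ν M : ℝ) (hν : 0 < ν)
    (hM : M = ⨆ l : Fin (L + 1), op11 (H l))
    (hΘ : (∑ l, ent1 (G l * W l)) + ν * ∑ l, ent1 (P l * W l) ≤ 1) :
    ∑ l, ent1 (W l) ≤ M + 1 / ν :=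
  stmt7_general L p q W G P H hHG ν M hν hM hΘ
end

section
/- Let 𝔹̂ be a minimizer of the regularized tensor least-squares objective 𝔸 ↦ ‖𝕐 − ⟨𝕏, 𝔸⟩_L‖_F² + λ h(𝔸), where 𝕐 = ⟨𝕏, 𝔹⟩_L + 𝕌 and h is a norm satisfying ‖𝔸‖₁ ≤ C·h(𝔸) for all 𝔸. If λ ≥ 2C·‖⟨𝕏, 𝕌⟩₁‖_∞, then ‖⟨𝕏, 𝔹⟩_L − ⟨𝕏, 𝔹̂⟩_L‖_F² ≤ inf_𝔸 { ‖⟨𝕏, 𝔹⟩_L − ⟨𝕏, 𝔸⟩_L‖_F² + 2λ h(𝔸) }. -/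
/-- prediction bound for regularized tensor regression. With
`𝕐 = ⟨𝕏,𝔹⟩_L + 𝕌`, `h` a norm with `‖·‖₁ ≤ C·h(·)`, and `𝔹̂` a minimizer of the
penalized objective, if `λ ≥ 2C‖⟨𝕏,𝕌⟩₁‖_∞` then
`‖⟨𝕏,𝔹⟩_L − ⟨𝕏,𝔹̂⟩_L‖_F² ≤ inf_𝔸 { ‖⟨𝕏,𝔹⟩_L − ⟨𝕏,𝔸⟩_L‖_F² + 2λ h(𝔸) }`.
(The modes `P₁×⋯×P_L` and `Q₁×⋯×Q_M` are represented by finite index types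
`ιP` and `ιQ`, and the contracted tensor product by summation over the shared modes.) -/
theorem stmt12 {N : ℕ} {ιP ιQ : Type*} [Fintype ιP] [Fintype ιQ]
    [Nonempty ιP] [Nonempty ιQ]
    (X : Fin N → ιP → ℝ) (B Bhat : ιP → ιQ → ℝ) (U : Fin N → ιQ → ℝ)
    (Y : Fin N → ιQ → ℝ)
    (hY : Y = fun i q => (∑ p, X i p * B p q) + U i q)
    (h : (ιP → ιQ → ℝ) → ℝ) (C lam : ℝ) (hC : 0 < C)
    (hnn : ∀ A, 0 ≤ h A)
    (hhom : ∀ (c : ℝ) A, h (c • A) = |c| * h A)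
    (htri : ∀ A A', h (A + A') ≤ h A + h A')
    (hdom : ∀ A : ιP → ιQ → ℝ, (∑ p, ∑ q, |A p q|) ≤ C * h A)
    (hmin : ∀ A : ιP → ιQ → ℝ,
      (∑ i, ∑ q, (Y i q - ∑ p, X i p * Bhat p q) ^ 2) + lam * h Bhat
        ≤ (∑ i, ∑ q, (Y i q - ∑ p, X i p * A p q) ^ 2) + lam * h A)
    (hlam : 2 * C * (⨆ p : ιP, ⨆ q : ιQ, |∑ i, X i p * U i q|) ≤ lam) :
    ∀ A : ιP → ιQ → ℝ,
      ∑ i, ∑ q, ((∑ p, X i p * B p q) - ∑ p, X i p * Bhat p q) ^ 2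
        ≤ (∑ i, ∑ q, ((∑ p, X i p * B p q) - ∑ p, X i p * A p q) ^ 2)
          + 2 * lam * h A := by
  intro A
  set S : ℝ := ⨆ p : ιP, ⨆ q : ιQ, |∑ i, X i p * U i q| with hSdef
  have hS : ∀ p q, |∑ i, X i p * U i q| ≤ S := by
    intro p q
    have h1 : |∑ i, X i p * U i q| ≤ ⨆ q' : ιQ, |∑ i, X i p * U i q'| :=
      le_ciSup (f := fun q' : ιQ => |∑ i, X i p * U i q'|)
        (Set.finite_range _).bddAbove q
    exact h1.trans (le_ciSup (f := fun p' : ιP => ⨆ q' : ιQ, |∑ i, X i p' * U i q'|)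
      (Set.finite_range _).bddAbove p)
  have hS0 : 0 ≤ S :=
    le_trans (abs_nonneg _) (hS (Classical.arbitrary ιP) (Classical.arbitrary ιQ))
  have hlam0 : 0 ≤ lam := le_trans (by positivity) hlam
  -- notation for the fits
  set fB : Fin N → ιQ → ℝ := fun i q => ∑ p, X i p * B p q with hfB
  -- expansion of the residual sum of squares
  have expand : ∀ M : ιP → ιQ → ℝ,
      (∑ i, ∑ q, (Y i q - ∑ p, X i p * M p q) ^ 2)
        = (∑ i, ∑ q, (fB i q - ∑ p, X i p * M p q) ^ 2)
          + 2 * (∑ i, ∑ q, U i q * (fB i q - ∑ p, X i p * M p q))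
          + ∑ i, ∑ q, (U i q) ^ 2 := by
    intro M
    have hpt : ∀ i q, (Y i q - ∑ p, X i p * M p q) ^ 2
        = (fB i q - ∑ p, X i p * M p q) ^ 2
          + 2 * (U i q * (fB i q - ∑ p, X i p * M p q)) + (U i q) ^ 2 := by
      intro i q; rw [hY]; simp only [hfB]; ring
    simp_rw [hpt, Finset.sum_add_distrib, ← Finset.mul_sum]
  -- the cross-term difference as a contracted sum
  have swap : (∑ i, ∑ q, U i q * (fB i q - ∑ p, X i p * A p q))
      - (∑ i, ∑ q, U i q * (fB i q - ∑ p, X i p * Bhat p q))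
      = ∑ p, ∑ q, (Bhat p q - A p q) * (∑ i, X i p * U i q) := by
    rw [← Finset.sum_sub_distrib]
    simp_rw [← Finset.sum_sub_distrib]
    have hpt : ∀ i q, (U i q * (fB i q - ∑ p, X i p * A p q)
        - U i q * (fB i q - ∑ p, X i p * Bhat p q))
        = ∑ p, (Bhat p q - A p q) * (X i p * U i q) := by
      intro i q
      rw [Finset.sum_congr rfl (fun p _ => by ring :
        ∀ p ∈ Finset.univ, (Bhat p q - A p q) * (X i p * U i q)
          = U i q * (X i p * Bhat p q) - U i q * (X i p * A p q)),
        Finset.sum_sub_distrib, ← Finset.mul_sum, ← Finset.mul_sum]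
      ring
    simp_rw [hpt, Finset.mul_sum]
    exact Finset.sum_comm.trans
      ((Finset.sum_congr rfl fun q _ => Finset.sum_comm).trans Finset.sum_comm)
  -- bound the cross term
  set D : ιP → ιQ → ℝ := fun p q => Bhat p q - A p q with hD
  have hDbound : h D ≤ h Bhat + h A := by
    have : D = Bhat + (-1 : ℝ) • A := by
      funext p q; simp [hD, sub_eq_add_neg]
    rw [this]
    calc h (Bhat + (-1 : ℝ) • A) ≤ h Bhat + h ((-1 : ℝ) • A) := htri _ _
      _ = h Bhat + h A := by rw [hhom]; norm_num
  have hcross : |∑ p, ∑ q, D p q * (∑ i, X i p * U i q)| ≤ C * h D * S := by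
    calc |∑ p, ∑ q, D p q * (∑ i, X i p * U i q)|
        ≤ ∑ p, ∑ q, |D p q * (∑ i, X i p * U i q)| := by
          refine (Finset.abs_sum_le_sum_abs _ _).trans ?_
          exact Finset.sum_le_sum fun p _ => Finset.abs_sum_le_sum_abs _ _
      _ ≤ ∑ p, ∑ q, |D p q| * S := by
          refine Finset.sum_le_sum fun p _ => Finset.sum_le_sum fun q _ => ?_
          rw [abs_mul]
          exact mul_le_mul_of_nonneg_left (hS p q) (abs_nonneg _)
      _ = (∑ p, ∑ q, |D p q|) * S := by
          simp_rw [← Finset.sum_mul]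
      _ ≤ C * h D * S := mul_le_mul_of_nonneg_right (hdom D) hS0
  have hcross2 : 2 * (∑ p, ∑ q, D p q * (∑ i, X i p * U i q))
      ≤ lam * (h Bhat + h A) := by
    have h1 : (∑ p, ∑ q, D p q * (∑ i, X i p * U i q)) ≤ C * h D * S :=
      le_trans (le_abs_self _) hcross
    have h2 : 2 * (C * h D * S) ≤ lam * h D := by
      have := mul_le_mul_of_nonneg_right hlam (hnn D)
      nlinarith [hnn D]
    have h3 : lam * h D ≤ lam * (h Bhat + h A) :=
      mul_le_mul_of_nonneg_left hDbound hlam0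
    linarith
  have key := hmin A
  rw [expand A, expand Bhat] at key
  have hsw : (∑ i, ∑ q, U i q * (fB i q - ∑ p, X i p * A p q))
      - (∑ i, ∑ q, U i q * (fB i q - ∑ p, X i p * Bhat p q))
      = ∑ p, ∑ q, D p q * (∑ i, X i p * U i q) := swap
  simp only [hfB] at key hsw ⊢
  linarith
end

section
/- Let Y = Xβ + U for X ∈ ℝ^{N×P}, and let β̂ minimize β ↦ ‖Y − Xβ‖₂² + λ h(β), where h is a norm on ℝ^P with ‖β‖₁ ≤ C·h(β). If λ ≥ 2C‖XᵀU‖_∞, then ‖Xβ − Xβ̂‖₂² ≤ inf_{α ∈ ℝ^P} { ‖Xβ − Xα‖₂² + 2λ h(α) }. -/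
open Matrix

/-- prediction bound for regularized least squares. With `Y = Xβ + U`,
`h` a norm on `ℝ^P` with `‖·‖₁ ≤ C·h(·)`, and `β̂` a minimizer of
`‖Y − Xβ‖₂² + λ h(β)`, if `λ ≥ 2C‖XᵀU‖_∞` then
`‖Xβ − Xβ̂‖₂² ≤ inf_α { ‖Xβ − Xα‖₂² + 2λ h(α) }`. -/
theorem stmt15 {N P : ℕ}
    (X : Matrix (Fin N) (Fin P) ℝ) (β βhat : Fin P → ℝ) (U Y : Fin N → ℝ)
    (hY : Y = X.mulVec β + U)
    (h : (Fin P → ℝ) → ℝ) (C lam : ℝ) (hC : 0 < C)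
    (hnn : ∀ b, 0 ≤ h b)
    (hhom : ∀ (c : ℝ) b, h (c • b) = |c| * h b)
    (htri : ∀ b b', h (b + b') ≤ h b + h b')
    (hdom : ∀ b : Fin P → ℝ, (∑ p, |b p|) ≤ C * h b)
    (hmin : ∀ b : Fin P → ℝ,
      (∑ i, (Y i - X.mulVec βhat i) ^ 2) + lam * h βhat
        ≤ (∑ i, (Y i - X.mulVec b i) ^ 2) + lam * h b)
    (hlam : 2 * C * (⨆ p : Fin P, |Xᵀ.mulVec U p|) ≤ lam) :
    ∀ α : Fin P → ℝ,
      ∑ i, (X.mulVec β i - X.mulVec βhat i) ^ 2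
        ≤ (∑ i, (X.mulVec β i - X.mulVec α i) ^ 2) + 2 * lam * h α := by
  intro α
  set w : Fin P → ℝ := Xᵀ.mulVec U with hw
  set S : ℝ := ⨆ p : Fin P, |w p| with hS
  have hS0 : 0 ≤ S := Real.iSup_nonneg fun p => abs_nonneg _
  have hSle : ∀ p, |w p| ≤ S := fun p =>
    le_ciSup (f := fun q => |w q|) (Set.Finite.bddAbove (Set.finite_range _)) p
  have expand : ∀ b : Fin P → ℝ,
      ∑ i, (Y i - X.mulVec b i) ^ 2
        = (∑ i, (X.mulVec β i - X.mulVec b i) ^ 2)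
          + 2 * (∑ p, w p * (β p - b p)) + ∑ i, (U i) ^ 2 := by
    intro b
    have hswap : ∑ i, (X.mulVec β i - X.mulVec b i) * U i
        = ∑ p, w p * (β p - b p) := by
      calc ∑ i, (X.mulVec β i - X.mulVec b i) * U i
          = ∑ i, ∑ p, X i p * (β p - b p) * U i := by
            refine Finset.sum_congr rfl fun i _ => ?_
            simp only [Matrix.mulVec, dotProduct, ← Finset.sum_sub_distrib,
              Finset.sum_mul]
            exact Finset.sum_congr rfl fun p _ => by ring
        _ = ∑ p, ∑ i, X i p * (β p - b p) * U i := Finset.sum_comm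
        _ = ∑ p, w p * (β p - b p) := by
            refine Finset.sum_congr rfl fun p _ => ?_
            simp only [hw, Matrix.mulVec, dotProduct, Matrix.transpose_apply,
              Finset.sum_mul]
            exact Finset.sum_congr rfl fun i _ => by ring
    calc ∑ i, (Y i - X.mulVec b i) ^ 2
        = ∑ i, ((X.mulVec β i - X.mulVec b i) ^ 2
            + 2 * ((X.mulVec β i - X.mulVec b i) * U i) + (U i) ^ 2) := by
          refine Finset.sum_congr rfl fun i _ => ?_
          rw [hY]; simp only [Pi.add_apply]; ring
      _ = (∑ i, (X.mulVec β i - X.mulVec b i) ^ 2)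
            + 2 * (∑ i, (X.mulVec β i - X.mulVec b i) * U i) + ∑ i, (U i) ^ 2 := by
          rw [Finset.sum_add_distrib, Finset.sum_add_distrib, ← Finset.mul_sum]
      _ = _ := by rw [hswap]
  have hminα := hmin α
  rw [expand βhat, expand α] at hminα
  -- bound the cross term
  have hhneg : h (-α) = h α := by
    have := hhom (-1) α
    simpa using this
  have hdiff : h (βhat - α) ≤ h βhat + h α := by
    have := htri βhat (-α)
    rw [hhneg] at this
    simpa [sub_eq_add_neg] using this
  have hcross : ∑ p, w p * (βhat p - α p) ≤ S * (C * (h βhat + h α)) := by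
    calc ∑ p, w p * (βhat p - α p) ≤ ∑ p, |w p * (βhat p - α p)| :=
          Finset.sum_le_sum fun p _ => le_abs_self _
      _ = ∑ p, |w p| * |βhat p - α p| := by
          refine Finset.sum_congr rfl fun p _ => abs_mul _ _
      _ ≤ ∑ p, S * |βhat p - α p| :=
          Finset.sum_le_sum fun p _ => mul_le_mul_of_nonneg_right (hSle p) (abs_nonneg _)
      _ = S * ∑ p, |(βhat - α) p| := by rw [← Finset.mul_sum]; simp [Pi.sub_apply]
      _ ≤ S * (C * h (βhat - α)) := mul_le_mul_of_nonneg_left (hdom _) hS0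
      _ ≤ S * (C * (h βhat + h α)) := by
          apply mul_le_mul_of_nonneg_left _ hS0
          exact mul_le_mul_of_nonneg_left hdiff hC.le
  have hsumeq : ∑ p, w p * (β p - α p) - ∑ p, w p * (β p - βhat p)
      = ∑ p, w p * (βhat p - α p) := by
    rw [← Finset.sum_sub_distrib]
    exact Finset.sum_congr rfl fun p _ => by ring
  have hSC : 2 * (S * (C * (h βhat + h α))) ≤ lam * (h βhat + h α) := by
    have h1 : 0 ≤ h βhat + h α := add_nonneg (hnn _) (hnn _)
    have h2 : 2 * C * S ≤ lam := hlam
    nlinarith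
  nlinarith [hcross, hsumeq, hminα, hSC]
end
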